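/- Conversely, if p is an odd integer such that p + 2 = x² + y² and p − 2 = z² + w² for integers x, y, z, w, then there exists a matrix in SL₂(ℤ) whose four entries have sum of squares equal to p. -/
import Mathlib

lemma sl2_aux (p x y z w : ℤ) (h1 : p + 2 = x^2 + y^2) (h2 : p - 2 = z^2 + w^2)
    (hxw : ∃ m : ℤ, x + w = 2 * m) (hyz : ∃ n : ℤ, y + z = 2 * n) :
    ∃ a b c d : ℤ, a * d - b * c = 1 ∧ a^2 + b^2 + c^2 + d^2 = p := by
  obtain ⟨m, hm⟩ := hxw
  obtain ⟨n, hn⟩ := hyz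
  have hw : w = 2 * m - x := by omega
  have hz : z = 2 * n - y := by omega
  subst hw hz
  refine ⟨m, n, n - y, x - m, ?_, ?_⟩
  · have h4 : 4 * (m * (x - m) - n * (n - y)) = 4 := by linear_combination h2 - h1
    linarith
  · have h5 : 2 * (m^2 + n^2 + (n - y)^2 + (x - m)^2) = 2 * p := by linear_combination -h1 - h2
    linarith

lemma odd_add_of_odd_sq_add_sq (a b : ℤ) (h : Odd (a^2 + b^2)) : Odd (a + b) := by
  have h2 : Odd ((a + b)^2) := by
    obtain ⟨t, ht⟩ := h
    exact ⟨t + a * b, by ring_nf; linarith⟩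
  have := Int.odd_pow.mp h2
  tauto

/-- Conversely, if p is odd and both p + 2 and p − 2 are sums of two squares, then some
matrix in SL₂(ℤ) has square-norm p. -/
theorem sum_of_squares_to_sl2 (p : ℤ) (hodd : Odd p)
    (hplus : ∃ x y : ℤ, p + 2 = x^2 + y^2) (hminus : ∃ z w : ℤ, p - 2 = z^2 + w^2) :
    ∃ a b c d : ℤ, a * d - b * c = 1 ∧ a^2 + b^2 + c^2 + d^2 = p := by
  obtain ⟨x, y, h1⟩ := hplus
  obtain ⟨z, w, h2⟩ := hminus
  obtain ⟨k, hk⟩ := hodd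
  obtain ⟨u, hu⟩ := odd_add_of_odd_sq_add_sq x y (h1 ▸ ⟨k + 1, by omega⟩)
  obtain ⟨v, hv⟩ := odd_add_of_odd_sq_add_sq z w (h2 ▸ ⟨k - 1, by omega⟩)
  rcases Int.even_or_odd (x + w) with ⟨m, hm⟩ | ⟨m, hm⟩
  · exact sl2_aux p x y z w h1 h2 ⟨m, by omega⟩ ⟨(y + z) / 2, by omega⟩
  · exact sl2_aux p x y w z h1 (by linarith [h2]; ) ⟨(x + z) / 2, by omega⟩ ⟨(y + w) / 2, by omega⟩
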